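/- There exists a constant C > 0 such that for every natural number n ≥ 1, ∫₀^π ∫_ℝ f_{n,θ}(x)² dx dθ ≤ C·n, where f_{n,θ}(x) is the number of squares of the n-th generation four-corner Cantor set whose θ-projection contains x. -/

import Mathlib

/-!
For a fixed direction `θ`, the projection of a square of side `δ = 4⁻ⁿ` lies in an interval of
length `(|cos θ| + |sin θ|) δ`, so `∫ f_{n,θ}²` is at most the sum, over ordered pairs of squares,
of the overlaps of these intervals. If the corners of two squares differ by `v ≠ 0`, the overlap
vanishes unless `|proj_θ v| ≤ 2δ`, which by Jordan's inequality happens on a set of directions of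
measure `O(δ / ‖v‖)`; so the pair contributes `O(δ² / ‖v‖)` after integrating over `θ`.

Summed over all pairs, this grows by `O(1)` per generation: pairs inside the same one of the four
first-generation squares reproduce the sum of the previous generation (the picture is scaled by
`1/4`, and there are four such squares), while pairs in different ones are at distance `≥ 1/2`, so
the at most `16ⁿ⁺¹` of them contribute `O(16⁻ⁿ⁻¹)` each.
-/

open MeasureTheory Real Set

noncomputable section

/-- Digit value: `false ↦ 0`, `true ↦ 3`. -/
def dig (b : Bool) : ℝ := if b then 3 else 0

/-- Left endpoint `x_a = ∑ a_j 4^{-j}` of the interval coded by the word `a ∈ {0,3}^n`. -/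
def cantorX {n : ℕ} (a : Fin n → Bool) : ℝ :=
  ∑ j : Fin n, dig (a j) * (4 : ℝ) ^ (-((j : ℕ) + 1) : ℤ)

/-- The `n`-th generation `C_n` of the middle-half Cantor set. -/
def cantorC (n : ℕ) : Set ℝ :=
  ⋃ a : Fin n → Bool, Icc (cantorX a) (cantorX a + (4 : ℝ) ^ (-(n : ℤ)))

/-- The `n`-th generation `K_n = C_n × C_n` of the four-corner Cantor set. -/
def cantorK (n : ℕ) : Set (ℝ × ℝ) := cantorC n ×ˢ cantorC n

/-- The square `Q_{a,b}` of side `4^{-n}` of the `n`-th generation. -/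
def cantorSq {n : ℕ} (a b : Fin n → Bool) : Set (ℝ × ℝ) :=
  Icc (cantorX a) (cantorX a + (4 : ℝ) ^ (-(n : ℤ))) ×ˢ
    Icc (cantorX b) (cantorX b + (4 : ℝ) ^ (-(n : ℤ)))

/-- Orthogonal projection in direction `θ`: `proj_θ (x, y) = x cos θ + y sin θ`. -/
def projAngle (θ : ℝ) (p : ℝ × ℝ) : ℝ := p.1 * Real.cos θ + p.2 * Real.sin θ

/-- The Favard length of a planar set. -/
def favard (E : Set (ℝ × ℝ)) : ℝ :=
  (1 / π) * ∫ θ in (0 : ℝ)..π, (volume (projAngle θ '' E)).toReal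

end

noncomputable section

/-- `f_{n,θ}(x)`: the number of squares `Q_{a,b}` of the `n`-th generation whose
`θ`-projection contains `x`. -/
def projMultiplicity (n : ℕ) (θ x : ℝ) : ℕ :=
  Nat.card {p : (Fin n → Bool) × (Fin n → Bool) | x ∈ projAngle θ '' cantorSq p.1 p.2}

end

section

variable {ι α : Type*} [Fintype ι]

theorem natCard_setOf_le_sum_indicator (P : ι → Prop) (s : ι → Set α) (x : α)
    (h : ∀ i, P i → x ∈ s i) :
    (Nat.card {i | P i} : ℝ) ≤ ∑ i, (s i).indicator 1 x := by
  classical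
  calc (Nat.card {i | P i} : ℝ) = ∑ i, if P i then (1 : ℝ) else 0 := by
        simp [Nat.card_eq_fintype_card, Fintype.card_subtype, Finset.sum_boole]
    _ ≤ ∑ i, (s i).indicator 1 x := by
        gcongr with i
        by_cases hi : P i
        · simp [hi, h i hi]
        · simp only [hi, if_false]
          exact Set.indicator_nonneg (fun _ _ => zero_le_one) x

theorem integral_sq_le_sum_measureReal_inter [MeasurableSpace α] (μ : Measure α) (s : ι → Set α)
    (hs : ∀ i, MeasurableSet (s i)) (hμs : ∀ i, μ (s i) ≠ ⊤) {g : α → ℝ} (hg : ∀ x, 0 ≤ g x)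
    (hgs : ∀ x, g x ≤ ∑ i, (s i).indicator 1 x) :
    ∫ x, g x ^ 2 ∂μ ≤ ∑ i, ∑ j, μ.real (s i ∩ s j) := by
  have hint : ∀ i j, Integrable ((s i ∩ s j).indicator (1 : α → ℝ)) μ := fun i j =>
    (integrable_indicator_iff ((hs i).inter (hs j))).2 <| integrableOn_const <|
      ne_top_of_le_ne_top (hμs i) (measure_mono Set.inter_subset_left)
  have hsq : ∀ x, g x ^ 2 ≤ ∑ i, ∑ j, (s i ∩ s j).indicator (1 : α → ℝ) x := fun x => by
    simp_rw [Set.inter_indicator_one, Pi.mul_apply, ← Finset.sum_mul_sum, ← sq]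
    exact pow_le_pow_left₀ (hg x) (hgs x) 2
  calc ∫ x, g x ^ 2 ∂μ ≤ ∫ x, ∑ i, ∑ j, (s i ∩ s j).indicator (1 : α → ℝ) x ∂μ :=
        integral_mono_of_nonneg (Filter.Eventually.of_forall fun x => sq_nonneg _)
          (integrable_finsetSum _ fun i _ => integrable_finsetSum _ fun j _ => hint i j)
          (Filter.Eventually.of_forall hsq)
    _ = ∑ i, ∑ j, μ.real (s i ∩ s j) := by
        rw [integral_finsetSum _ fun i _ => integrable_finsetSum _ fun j _ => hint i j]
        simp_rw [integral_finsetSum _ fun j _ => hint _ j,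
          integral_indicator_one ((hs _).inter (hs _))]

end

theorem volume_real_Icc_inter_Icc (a b r : ℝ) :
    volume.real (Icc (a - r) (a + r) ∩ Icc (b - r) (b + r)) = max (2 * r - |a - b|) 0 := by
  rw [Icc_inter_Icc, Real.volume_real_Icc, min_add_add_right, max_sub_sub_right,
    ← max_sub_min_eq_abs']
  ring_nf

theorem projAngle_sub (θ : ℝ) (p q : ℝ × ℝ) :
    projAngle θ p - projAngle θ q = projAngle θ (p - q) := by
  simp only [projAngle, Prod.fst_sub, Prod.snd_sub]; ring

theorem projAngle_smul (θ c : ℝ) (v : ℝ × ℝ) : projAngle θ (c • v) = c * projAngle θ v := by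
  simp only [projAngle, Prod.smul_fst, Prod.smul_snd, smul_eq_mul]; ring

theorem projAngle_image_square_subset (θ δ : ℝ) (z : ℝ × ℝ) :
    projAngle θ '' (Icc z.1 (z.1 + δ) ×ˢ Icc z.2 (z.2 + δ)) ⊆
      Icc (projAngle θ (z + (δ / 2, δ / 2)) - (|cos θ| + |sin θ|) * δ / 2)
        (projAngle θ (z + (δ / 2, δ / 2)) + (|cos θ| + |sin θ|) * δ / 2) := by
  rintro _ ⟨w, ⟨⟨hx₁, hx₂⟩, ⟨hy₁, hy₂⟩⟩, rfl⟩
  rw [← mem_Icc_iff_abs_le, abs_sub_comm, projAngle_sub]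
  have hx : |w.1 - (z.1 + δ / 2)| ≤ δ / 2 := abs_sub_le_iff.2 ⟨by linarith, by linarith⟩
  have hy : |w.2 - (z.2 + δ / 2)| ≤ δ / 2 := abs_sub_le_iff.2 ⟨by linarith, by linarith⟩
  calc |projAngle θ (w - (z + (δ / 2, δ / 2)))|
        = |(w.1 - (z.1 + δ / 2)) * cos θ + (w.2 - (z.2 + δ / 2)) * sin θ| := rfl
    _ ≤ |w.1 - (z.1 + δ / 2)| * |cos θ| + |w.2 - (z.2 + δ / 2)| * |sin θ| := by
        rw [← abs_mul, ← abs_mul]; exact abs_add_le _ _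
    _ ≤ δ / 2 * |cos θ| + δ / 2 * |sin θ| := by gcongr
    _ = (|cos θ| + |sin θ|) * δ / 2 := by ring

/-- The length of the overlap of the `θ`-projections of two axis-parallel squares of side `δ`
whose corners differ by `v`. -/
noncomputable def projOverlap (δ : ℝ) (v : ℝ × ℝ) (θ : ℝ) : ℝ :=
  max ((|cos θ| + |sin θ|) * δ - |projAngle θ v|) 0

theorem continuous_projOverlap (δ : ℝ) (v : ℝ × ℝ) : Continuous (projOverlap δ v) := by
  unfold projOverlap projAngle; fun_prop

theorem projOverlap_le {δ : ℝ} (hδ : 0 ≤ δ) (v : ℝ × ℝ) (θ : ℝ) :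
    projOverlap δ v θ ≤ max (2 * δ - |projAngle θ v|) 0 := by
  have := add_le_add (abs_cos_le_one θ) (abs_sin_le_one θ)
  unfold projOverlap
  gcongr
  nlinarith

theorem projOverlap_smul {c : ℝ} (hc : 0 ≤ c) (δ : ℝ) (v : ℝ × ℝ) (θ : ℝ) :
    projOverlap (c * δ) (c • v) θ = c * projOverlap δ v θ := by
  rw [projOverlap, projOverlap, projAngle_smul, abs_mul, abs_of_nonneg hc,
    mul_max_of_nonneg _ _ hc, mul_zero]
  ring_nf

theorem exists_abs_projAngle_eq (v : ℝ × ℝ) :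
    ∃ R ψ : ℝ, ‖v‖ ≤ R ∧ ∀ θ, |projAngle θ v| = R * |sin (θ - ψ)| := by
  set z : ℂ := ⟨v.1, v.2⟩
  refine ⟨‖z‖, Complex.arg z - π / 2, ?_, fun θ => ?_⟩
  · rw [Prod.norm_def, Real.norm_eq_abs, Real.norm_eq_abs]
    exact max_le (Complex.abs_re_le_norm z) (Complex.abs_im_le_norm z)
  · have hre : ‖z‖ * cos (Complex.arg z) = v.1 := Complex.norm_mul_cos_arg z
    have him : ‖z‖ * sin (Complex.arg z) = v.2 := Complex.norm_mul_sin_arg z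
    rw [← abs_norm, ← abs_mul, sub_sub_eq_add_sub, add_sub_right_comm, sin_add_pi_div_two, cos_sub]
    congr 1
    simp only [projAngle]
    linear_combination -(cos θ * hre + sin θ * him)

theorem intervalIntegral_max_sub_mul_abs_sin_le {c R : ℝ} (hc : 0 ≤ c) (hR : 0 < R) :
    ∫ t in -(π / 2)..π / 2, max (c - R * |sin t|) 0 ≤ π * c ^ 2 / R := by
  set w := π * c / (2 * R) with hw
  have hw₀ : 0 ≤ w := by rw [hw]; positivity
  have hind : Integrable ((Icc (-w) w).indicator fun _ => c) :=
    (integrable_indicator_iff measurableSet_Icc).2 (integrableOn_const measure_Icc_lt_top.ne)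
  -- Jordan's inequality `sin |t| ≥ 2|t|/π` confines the support to `[-w, w]`.
  have hpt : ∀ t ∈ Icc (-(π / 2)) (π / 2),
      max (c - R * |sin t|) 0 ≤ (Icc (-w) w).indicator (fun _ => c) t := by
    intro t ht
    by_cases htw : t ∈ Icc (-w) w
    · rw [indicator_of_mem htw]
      exact max_le (by nlinarith [abs_nonneg (sin t)]) hc
    · rw [indicator_of_notMem htw]
      refine max_le ?_ le_rfl
      have hwt : w < |t| := by
        rw [← not_le, abs_le]; exact htw
      have hsin : 2 / π * |t| ≤ |sin t| := by
        rw [abs_sin_eq_sin_abs_of_abs_le_pi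
          (abs_le.2 ⟨by linarith [ht.1, pi_pos], by linarith [ht.2, pi_pos]⟩)]
        exact mul_le_sin (abs_nonneg t) (abs_le.2 ht)
      have hcw : c = R * (2 / π * w) := by rw [hw]; field_simp
      rw [sub_nonpos, hcw]
      gcongr
      exact le_trans (by gcongr) hsin
  calc ∫ t in -(π / 2)..π / 2, max (c - R * |sin t|) 0
      ≤ ∫ t in -(π / 2)..π / 2, (Icc (-w) w).indicator (fun _ => c) t :=
        intervalIntegral.integral_mono_on (by linarith [pi_pos])
          ((by fun_prop : Continuous fun t => max (c - R * |sin t|) 0).intervalIntegrable _ _)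
          hind.intervalIntegrable hpt
    _ ≤ ∫ t, (Icc (-w) w).indicator (fun _ => c) t := by
        rw [intervalIntegral.integral_of_le (by linarith [pi_pos])]
        exact setIntegral_le_integral hind (Filter.Eventually.of_forall fun t =>
          indicator_nonneg (fun _ _ => hc) t)
    _ = π * c ^ 2 / R := by
        rw [integral_indicator_const _ measurableSet_Icc, Real.volume_real_Icc, smul_eq_mul,
          max_eq_left (by linarith), hw]
        field_simp
        ring

theorem integral_projOverlap_le {δ : ℝ} (hδ : 0 ≤ δ) {v : ℝ × ℝ} (hv : v ≠ 0) :
    ∫ θ in (0 : ℝ)..π, projOverlap δ v θ ≤ 4 * π * δ ^ 2 / ‖v‖ := by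
  obtain ⟨R, ψ, hvR, hproj⟩ := exists_abs_projAngle_eq v
  have hv₀ : 0 < ‖v‖ := norm_pos_iff.2 hv
  set g : ℝ → ℝ := fun t => max (2 * δ - R * |sin t|) 0
  have hg : Function.Periodic g π := fun t => by simp only [g, sin_add_pi, abs_neg]
  calc ∫ θ in (0 : ℝ)..π, projOverlap δ v θ
      ≤ ∫ θ in (0 : ℝ)..π, g (θ - ψ) :=
        intervalIntegral.integral_mono_on pi_pos.le
          ((continuous_projOverlap δ v).intervalIntegrable _ _)
          ((by fun_prop : Continuous fun θ => g (θ - ψ)).intervalIntegrable _ _)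
          fun θ _ => by simpa only [g, hproj] using projOverlap_le hδ v θ
    _ = ∫ t in -(π / 2)..π / 2, g t := by
        rw [intervalIntegral.integral_comp_sub_right]
        convert hg.intervalIntegral_add_eq (-ψ) (-(π / 2)) using 1 <;> ring_nf
    _ ≤ π * (2 * δ) ^ 2 / R :=
        intervalIntegral_max_sub_mul_abs_sin_le (by positivity) (hv₀.trans_le hvR)
    _ ≤ 4 * π * δ ^ 2 / ‖v‖ := by
        rw [mul_pow, ← mul_assoc, mul_comm π]
        gcongr
        norm_num

theorem integral_projOverlap_le_two_pi_mul {δ : ℝ} (hδ : 0 ≤ δ) (v : ℝ × ℝ) :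
    ∫ θ in (0 : ℝ)..π, projOverlap δ v θ ≤ 2 * π * δ := by
  calc ∫ θ in (0 : ℝ)..π, projOverlap δ v θ ≤ ∫ θ in (0 : ℝ)..π, 2 * δ :=
        intervalIntegral.integral_mono_on pi_pos.le
          ((continuous_projOverlap _ _).intervalIntegrable _ _) intervalIntegrable_const
          fun θ _ => (projOverlap_le hδ v θ).trans
            (max_le (by linarith [abs_nonneg (projAngle θ v)]) (by positivity))
    _ = 2 * π * δ := by simp only [intervalIntegral.integral_const, sub_zero, smul_eq_mul]; ring

theorem abs_dig_sub_dig_of_ne {b b' : Bool} (h : b ≠ b') : |dig b - dig b'| = 3 := by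
  cases b <;> cases b' <;> simp_all [dig]

theorem cantorX_cons {n : ℕ} (b : Bool) (a : Fin n → Bool) :
    cantorX (Fin.cons b a : Fin (n + 1) → Bool) = (dig b + cantorX a) / 4 := by
  simp only [cantorX, Fin.sum_univ_succ, Fin.cons_zero, Fin.cons_succ, Fin.val_zero,
    Fin.val_succ, Finset.sum_div, add_div]
  congr 1
  · norm_num [div_eq_mul_inv]
  · refine Finset.sum_congr rfl fun j _ => ?_
    push_cast
    rw [neg_add, zpow_add₀ (by norm_num), zpow_neg_one]
    ring

theorem cantorX_mem_Icc : ∀ {n : ℕ} (a : Fin n → Bool), cantorX a ∈ Icc (0 : ℝ) 1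
  | 0, a => by simp [cantorX]
  | n + 1, a => by
    have ih := cantorX_mem_Icc (Fin.tail a)
    have hdig : dig (a 0) ∈ Icc (0 : ℝ) 3 := by unfold dig; split <;> norm_num
    rw [← Fin.cons_self_tail a, cantorX_cons]
    constructor <;> linarith [ih.1, ih.2, hdig.1, hdig.2]

abbrev CantorIndex (n : ℕ) := (Fin n → Bool) × (Fin n → Bool)

def CantorIndex.cons {n : ℕ} (d : Bool × Bool) (p : CantorIndex n) : CantorIndex (n + 1) :=
  (Fin.cons d.1 p.1, Fin.cons d.2 p.2)

theorem CantorIndex.sum_cons {M : Type*} [AddCommMonoid M] {n : ℕ} (f : CantorIndex (n + 1) → M) :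
    ∑ P, f P = ∑ d, ∑ p, f (CantorIndex.cons d p) := by
  rw [← Fintype.sum_prod_type']
  exact (Fintype.sum_equiv ((Equiv.prodProdProdComm _ _ _ _).trans
    ((Fin.consEquiv _).prodCongr (Fin.consEquiv _))) _ _ fun _ => rfl).symm

noncomputable def cantorCorner {n : ℕ} (p : CantorIndex n) : ℝ × ℝ := (cantorX p.1, cantorX p.2)

theorem cantorCorner_cons_sub_cons {n : ℕ} (d d' : Bool × Bool) (p q : CantorIndex n) :
    cantorCorner (p.cons d) - cantorCorner (q.cons d') =
      (4⁻¹ : ℝ) •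
        ((dig d.1 - dig d'.1, dig d.2 - dig d'.2) + (cantorCorner p - cantorCorner q)) := by
  ext <;> simp only [cantorCorner, CantorIndex.cons, cantorX_cons, Prod.fst_sub, Prod.snd_sub,
    Prod.smul_fst, Prod.smul_snd, Prod.fst_add, Prod.snd_add, smul_eq_mul] <;> ring

theorem norm_cantorCorner_sub_le {n : ℕ} (p q : CantorIndex n) :
    ‖cantorCorner p - cantorCorner q‖ ≤ 1 := by
  have hdist : ∀ a b : Fin n → Bool, |cantorX a - cantorX b| ≤ 1 := fun a b => by
    have ha := cantorX_mem_Icc a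
    have hb := cantorX_mem_Icc b
    rw [abs_le]; constructor <;> linarith [ha.1, ha.2, hb.1, hb.2]
  rw [Prod.norm_def, Real.norm_eq_abs, Real.norm_eq_abs]
  exact max_le (hdist _ _) (hdist _ _)

theorem half_le_norm_cantorCorner_cons_sub_cons {n : ℕ} {d d' : Bool × Bool} (h : d ≠ d')
    (p q : CantorIndex n) : 1 / 2 ≤ ‖cantorCorner (p.cons d) - cantorCorner (q.cons d')‖ := by
  set w : ℝ × ℝ := (dig d.1 - dig d'.1, dig d.2 - dig d'.2)
  have hw : 3 ≤ ‖w‖ := by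
    rw [Prod.norm_def, Real.norm_eq_abs, Real.norm_eq_abs]
    by_cases h₁ : d.1 = d'.1
    · exact le_max_of_le_right (abs_dig_sub_dig_of_ne fun h₂ => h (Prod.ext h₁ h₂)).ge
    · exact le_max_of_le_left (abs_dig_sub_dig_of_ne h₁).ge
  set u := cantorCorner p - cantorCorner q
  have hwu := norm_sub_le (w + u) u
  rw [add_sub_cancel_right] at hwu
  rw [cantorCorner_cons_sub_cons]
  change 1 / 2 ≤ ‖(4⁻¹ : ℝ) • (w + u)‖
  rw [norm_smul, norm_inv, Real.norm_ofNat]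
  linarith [norm_cantorCorner_sub_le p q]

theorem integral_projMultiplicity_sq_le_sum_projOverlap (n : ℕ) (θ : ℝ) :
    ∫ x, (projMultiplicity n θ x : ℝ) ^ 2 ≤
      ∑ p : CantorIndex n, ∑ q : CantorIndex n,
        projOverlap ((4 : ℝ) ^ (-(n : ℤ))) (cantorCorner p - cantorCorner q) θ := by
  set δ : ℝ := (4 : ℝ) ^ (-(n : ℤ))
  set c : CantorIndex n → ℝ := fun p => projAngle θ (cantorCorner p + (δ / 2, δ / 2))
  set r : ℝ := (|cos θ| + |sin θ|) * δ / 2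
  calc ∫ x, (projMultiplicity n θ x : ℝ) ^ 2
      ≤ ∑ p, ∑ q, volume.real (Icc (c p - r) (c p + r) ∩ Icc (c q - r) (c q + r)) :=
        integral_sq_le_sum_measureReal_inter _ _ (fun _ => measurableSet_Icc)
          (fun _ => measure_Icc_lt_top.ne) (fun _ => Nat.cast_nonneg _) fun x =>
            natCard_setOf_le_sum_indicator _ _ x fun p hp =>
              projAngle_image_square_subset θ δ (cantorCorner p) hp
    _ = ∑ p, ∑ q, projOverlap δ (cantorCorner p - cantorCorner q) θ := by
        simp only [volume_real_Icc_inter_Icc, c, projAngle_sub, add_sub_add_right_eq_sub,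
          projOverlap, r]
        ring_nf

noncomputable def pairEnergy {n : ℕ} (p q : CantorIndex n) : ℝ :=
  ∫ θ in (0 : ℝ)..π, projOverlap ((4 : ℝ) ^ (-(n : ℤ))) (cantorCorner p - cantorCorner q) θ

noncomputable def overlapEnergy (n : ℕ) : ℝ :=
  ∑ p : CantorIndex n, ∑ q : CantorIndex n, pairEnergy p q

theorem integral_integral_projMultiplicity_sq_le_overlapEnergy (n : ℕ) :
    ∫ θ in (0 : ℝ)..π, ∫ x, (projMultiplicity n θ x : ℝ) ^ 2 ≤ overlapEnergy n := by
  have hsum : IntervalIntegrable (fun θ => ∑ p : CantorIndex n, ∑ q : CantorIndex n,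
      projOverlap ((4 : ℝ) ^ (-(n : ℤ))) (cantorCorner p - cantorCorner q) θ) volume 0 π :=
    (continuous_finsetSum _ fun p _ => continuous_finsetSum _ fun q _ =>
      continuous_projOverlap _ _).intervalIntegrable _ _
  calc ∫ θ in (0 : ℝ)..π, ∫ x, (projMultiplicity n θ x : ℝ) ^ 2
      ≤ ∫ θ in (0 : ℝ)..π, ∑ p : CantorIndex n, ∑ q : CantorIndex n,
          projOverlap ((4 : ℝ) ^ (-(n : ℤ))) (cantorCorner p - cantorCorner q) θ := by
        rw [intervalIntegral.integral_of_le pi_pos.le, intervalIntegral.integral_of_le pi_pos.le]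
        exact integral_mono_of_nonneg
          (Filter.Eventually.of_forall fun θ => integral_nonneg fun x => sq_nonneg _)
          hsum.1 (Filter.Eventually.of_forall (integral_projMultiplicity_sq_le_sum_projOverlap n))
    _ = overlapEnergy n := by
        rw [intervalIntegral.integral_finsetSum fun p _ =>
          (continuous_finsetSum _ fun q _ => continuous_projOverlap _ _).intervalIntegrable _ _]
        exact Finset.sum_congr rfl fun p _ => intervalIntegral.integral_finsetSum fun q _ =>
          (continuous_projOverlap _ _).intervalIntegrable _ _

theorem four_zpow_neg_succ (n : ℕ) :
    (4 : ℝ) ^ (-((n + 1 : ℕ) : ℤ)) = 4⁻¹ * (4 : ℝ) ^ (-(n : ℤ)) := by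
  push_cast
  rw [neg_add, zpow_add₀ (by norm_num), zpow_neg_one, mul_comm]

theorem card_cantorIndex_mul_four_zpow_neg (n : ℕ) :
    (Fintype.card (CantorIndex n) : ℝ) * (4 : ℝ) ^ (-(n : ℤ)) = 1 := by
  simp only [Fintype.card_prod, Fintype.card_fun, Fintype.card_bool, Fintype.card_fin, zpow_neg,
    zpow_natCast]
  push_cast
  rw [← mul_pow]
  norm_num

theorem pairEnergy_le {n : ℕ} (p q : CantorIndex n) :
    pairEnergy p q ≤ 2 * π * (4 : ℝ) ^ (-(n : ℤ)) :=
  integral_projOverlap_le_two_pi_mul (by positivity) _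

theorem pairEnergy_cons_cons_self {n : ℕ} (d : Bool × Bool) (p q : CantorIndex n) :
    pairEnergy (p.cons d) (q.cons d) = 4⁻¹ * pairEnergy p q := by
  simp only [pairEnergy, four_zpow_neg_succ, cantorCorner_cons_sub_cons, sub_self,
    Prod.mk_zero_zero, zero_add, projOverlap_smul (by norm_num : (0 : ℝ) ≤ 4⁻¹),
    intervalIntegral.integral_const_mul]

theorem pairEnergy_cons_cons_le {n : ℕ} {d d' : Bool × Bool} (h : d ≠ d') (p q : CantorIndex n) :
    pairEnergy (p.cons d) (q.cons d') ≤ π / 2 * ((4 : ℝ) ^ (-(n : ℤ))) ^ 2 := by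
  have hsep := half_le_norm_cantorCorner_cons_sub_cons h p q
  calc pairEnergy (p.cons d) (q.cons d')
      ≤ 4 * π * ((4 : ℝ) ^ (-((n + 1 : ℕ) : ℤ))) ^ 2 /
          ‖cantorCorner (p.cons d) - cantorCorner (q.cons d')‖ :=
        integral_projOverlap_le (by positivity) (norm_pos_iff.1 (by linarith))
    _ ≤ 4 * π * ((4 : ℝ) ^ (-((n + 1 : ℕ) : ℤ))) ^ 2 / (1 / 2) := by gcongr
    _ = π / 2 * ((4 : ℝ) ^ (-(n : ℤ))) ^ 2 := by rw [four_zpow_neg_succ]; ring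

theorem overlapEnergy_succ_le (n : ℕ) : overlapEnergy (n + 1) ≤ overlapEnergy n + 8 * π := by
  have hblock : ∀ d d' : Bool × Bool,
      ∑ p : CantorIndex n, ∑ q : CantorIndex n, pairEnergy (p.cons d) (q.cons d') ≤
        (if d = d' then overlapEnergy n / 4 else 0) + π / 2 := by
    intro d d'
    rcases eq_or_ne d d' with rfl | hd
    · simp only [pairEnergy_cons_cons_self, ← Finset.mul_sum, if_true, overlapEnergy]
      linarith [pi_pos]
    · calc ∑ p : CantorIndex n, ∑ q : CantorIndex n, pairEnergy (p.cons d) (q.cons d')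
          ≤ ∑ p : CantorIndex n, ∑ q : CantorIndex n, π / 2 * ((4 : ℝ) ^ (-(n : ℤ))) ^ 2 :=
            Finset.sum_le_sum fun p _ => Finset.sum_le_sum fun q _ => pairEnergy_cons_cons_le hd p q
        _ = (if d = d' then overlapEnergy n / 4 else 0) + π / 2 := by
            simp only [Finset.sum_const, Finset.card_univ, nsmul_eq_mul, hd, if_false, zero_add]
            linear_combination (π / 2) *
              (Fintype.card (CantorIndex n) * (4 : ℝ) ^ (-(n : ℤ)) + 1) *
              card_cantorIndex_mul_four_zpow_neg n
  calc overlapEnergy (n + 1)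
      = ∑ d, ∑ d', ∑ p : CantorIndex n, ∑ q : CantorIndex n, pairEnergy (p.cons d) (q.cons d') := by
        simp only [overlapEnergy, CantorIndex.sum_cons]
        exact Finset.sum_congr rfl fun d _ => Finset.sum_comm
    _ ≤ ∑ d : Bool × Bool, ∑ d' : Bool × Bool,
        ((if d = d' then overlapEnergy n / 4 else 0) + π / 2) :=
        Finset.sum_le_sum fun d _ => Finset.sum_le_sum fun d' _ => hblock d d'
    _ = overlapEnergy n + 8 * π := by
        simp only [Finset.sum_add_distrib, Finset.sum_ite_eq, Finset.mem_univ, if_true,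
          Finset.sum_const, Finset.card_univ, Fintype.card_prod, Fintype.card_bool, nsmul_eq_mul]
        push_cast
        ring

theorem overlapEnergy_le (n : ℕ) : overlapEnergy n ≤ 2 * π + 8 * π * n := by
  induction n with
  | zero =>
    calc overlapEnergy 0 ≤ ∑ _p : CantorIndex 0, ∑ _q : CantorIndex 0, 2 * π * 1 :=
          Finset.sum_le_sum fun p _ => Finset.sum_le_sum fun q _ => by
            simpa using pairEnergy_le p q
      _ = 2 * π + 8 * π * (0 : ℕ) := by simp
  | succ n ih =>
    push_cast
    linarith [overlapEnergy_succ_le n]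

/-- There exists `C > 0` such that for every `n ≥ 1`,
`∫₀^π ∫_ℝ f_{n,θ}(x)² dx dθ ≤ C · n`. -/
theorem integral_projMultiplicity_sq_le : ∃ C : ℝ, 0 < C ∧ ∀ n : ℕ, 1 ≤ n →
    (∫ θ in (0 : ℝ)..π, ∫ x : ℝ, (projMultiplicity n θ x : ℝ) ^ 2) ≤ C * n := by
  refine ⟨10 * π, by positivity, fun n hn => ?_⟩
  have hn' : (1 : ℝ) ≤ n := by exact_mod_cast hn
  calc ∫ θ in (0 : ℝ)..π, ∫ x : ℝ, (projMultiplicity n θ x : ℝ) ^ 2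
      ≤ overlapEnergy n := integral_integral_projMultiplicity_sq_le_overlapEnergy n
    _ ≤ 2 * π + 8 * π * n := overlapEnergy_le n
    _ ≤ 10 * π * n := by nlinarith [pi_pos]
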